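/- Suppose T̄ : [0, ∞) → M_fin([0,1]) is continuous (weak topology, signed measures of bounded variation) and satisfies ∫₀¹ φ(u) T̄(t, du) = (D/(4γ)) ∫₀ᵗ ∫₀¹ φ''(u) T̄(s, du) ds for every t ≥ 0 and every φ ∈ C²[0,1] with φ(0) = φ'(1) = 0, where D, γ > 0. Then T̄(t, ·) = 0 for all t ≥ 0. -/

import Mathlib

open MeasureTheory
open scoped NNReal ENNReal

/-- Integral of a function against a finite signed measure, via the Jordan
decomposition. -/
noncomputable def sIntegral (σ : MeasureTheory.SignedMeasure (Set.Icc (0:ℝ) 1))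
    (φ : Set.Icc (0:ℝ) 1 → ℝ) : ℝ :=
  (∫ x, φ x ∂σ.toJordanDecomposition.posPart) - ∫ x, φ x ∂σ.toJordanDecomposition.negPart

namespace HeatUniq

open Real BoundedContinuousFunction intervalIntegral

abbrev XX : Type := Set.Icc (0:ℝ) 1

lemma integrable_cm (μ : Measure XX) [IsFiniteMeasure μ] (h : C(XX,ℝ)) :
    Integrable (fun x => h x) μ := by
  exact (BoundedContinuousFunction.mkOfCompact h).integrable μ

noncomputable def Lm (σ : MeasureTheory.SignedMeasure XX) (h : C(XX,ℝ)) : ℝ :=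
  sIntegral σ (fun u => h u)

lemma Lm_add (σ : MeasureTheory.SignedMeasure XX) (h₁ h₂ : C(XX,ℝ)) :
    Lm σ (h₁ + h₂) = Lm σ h₁ + Lm σ h₂ := by
  simp only [Lm, sIntegral, ContinuousMap.add_apply]
  rw [integral_add (integrable_cm _ h₁) (integrable_cm _ h₂),
      integral_add (integrable_cm _ h₁) (integrable_cm _ h₂)]
  ring

lemma Lm_sub (σ : MeasureTheory.SignedMeasure XX) (h₁ h₂ : C(XX,ℝ)) :
    Lm σ (h₁ - h₂) = Lm σ h₁ - Lm σ h₂ := by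
  simp only [Lm, sIntegral, ContinuousMap.sub_apply]
  rw [integral_sub (integrable_cm _ h₁) (integrable_cm _ h₂),
      integral_sub (integrable_cm _ h₁) (integrable_cm _ h₂)]
  ring

lemma Lm_smul (σ : MeasureTheory.SignedMeasure XX) (r : ℝ) (h : C(XX,ℝ)) :
    Lm σ (r • h) = r * Lm σ h := by
  simp only [Lm, sIntegral, ContinuousMap.smul_apply, smul_eq_mul]
  rw [MeasureTheory.integral_const_mul, MeasureTheory.integral_const_mul]
  ring

lemma Lm_zero (σ : MeasureTheory.SignedMeasure XX) : Lm σ 0 = 0 := by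
  simp [Lm, sIntegral]

noncomputable def mass (σ : MeasureTheory.SignedMeasure XX) : ℝ :=
  (σ.toJordanDecomposition.posPart Set.univ).toReal
    + (σ.toJordanDecomposition.negPart Set.univ).toReal

lemma mass_nonneg (σ : MeasureTheory.SignedMeasure XX) : 0 ≤ mass σ :=
  add_nonneg ENNReal.toReal_nonneg ENNReal.toReal_nonneg

lemma int_bound (μ : Measure XX) [IsFiniteMeasure μ] (h : C(XX,ℝ)) :
    ‖∫ x, h x ∂μ‖ ≤ (μ Set.univ).toReal * ‖h‖ := by
  have := norm_integral_le_of_norm_le_const (μ := μ) (f := fun x => h x) (C := ‖h‖)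
    (Filter.Eventually.of_forall fun x => h.norm_coe_le_norm x)
  rw [show μ.real Set.univ = (μ Set.univ).toReal from rfl] at this
  linarith [this, mul_comm ‖h‖ (μ Set.univ).toReal]

lemma Lm_bound (σ : MeasureTheory.SignedMeasure XX) (h : C(XX,ℝ)) :
    |Lm σ h| ≤ mass σ * ‖h‖ := by
  have h1 := int_bound σ.toJordanDecomposition.posPart h
  have h2 := int_bound σ.toJordanDecomposition.negPart h
  simp only [Real.norm_eq_abs] at h1 h2
  have : |Lm σ h| ≤ |∫ x, h x ∂σ.toJordanDecomposition.posPart|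
      + |∫ x, h x ∂σ.toJordanDecomposition.negPart| := abs_sub _ _
  simp only [mass]
  nlinarith [this]

lemma Lm_continuous (σ : MeasureTheory.SignedMeasure XX) : Continuous (Lm σ) := by
  have : LipschitzWith (Real.toNNReal (mass σ)) (Lm σ) := by
    rw [lipschitzWith_iff_dist_le_mul]
    intro h₁ h₂
    rw [Real.dist_eq, dist_eq_norm, ← Lm_sub]
    calc |Lm σ (h₁ - h₂)| ≤ mass σ * ‖h₁ - h₂‖ := Lm_bound σ _
    _ ≤ (Real.toNNReal (mass σ) : ℝ) * ‖h₁ - h₂‖ := by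
        gcongr; exact Real.le_coe_toNNReal _
  exact this.continuous

/-! ### Eigenfunctions -/

noncomputable def lam (k : ℤ) : ℝ := ((k:ℝ) + 1/2) * π

noncomputable def phik (k : ℤ) : ℝ → ℝ := fun u => Real.sin (lam k * u)

lemma phik_contDiff (k : ℤ) : ContDiff ℝ 2 (phik k) :=
  Real.contDiff_sin.comp (contDiff_const.mul contDiff_id)

lemma phik_continuous (k : ℤ) : Continuous (phik k) :=
  Real.continuous_sin.comp (continuous_const.mul continuous_id)

lemma phik_zero (k : ℤ) : phik k 0 = 0 := by simp [phik]

lemma hasDerivAt_lam_mul (k : ℤ) (x : ℝ) :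
    HasDerivAt (fun u : ℝ => lam k * u) (lam k) x := by
  simpa using (hasDerivAt_id x).const_mul (lam k)

lemma phik_hasDeriv (k : ℤ) (x : ℝ) :
    HasDerivAt (phik k) (Real.cos (lam k * x) * lam k) x :=
  (Real.hasDerivAt_sin (lam k * x)).comp x (hasDerivAt_lam_mul k x)

lemma deriv_phik (k : ℤ) : deriv (phik k) = fun x => Real.cos (lam k * x) * lam k :=
  funext fun x => (phik_hasDeriv k x).deriv

lemma deriv_phik_one (k : ℤ) : deriv (phik k) 1 = 0 := by
  rw [deriv_phik]
  have : Real.cos (lam k) = 0 := by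
    rw [Real.cos_eq_zero_iff]
    exact ⟨k, by unfold lam; ring⟩
  simp [this]

lemma deriv2_phik (k : ℤ) :
    deriv (deriv (phik k)) = fun x => -(lam k)^2 * phik k x := by
  rw [deriv_phik]
  funext x
  have : HasDerivAt (fun x => Real.cos (lam k * x) * lam k)
      ((-Real.sin (lam k * x) * lam k) * lam k) x :=
    ((Real.hasDerivAt_cos (lam k * x)).comp x (hasDerivAt_lam_mul k x)).mul_const (lam k)
  rw [this.deriv]; unfold phik; ring

/-! ### The polynomial test function -/

noncomputable def ph0 : ℝ → ℝ := fun u => u^2/2 - u^3/3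

lemma ph0_contDiff : ContDiff ℝ 2 ph0 :=
  ((contDiff_id.pow 2).div_const 2).sub ((contDiff_id.pow 3).div_const 3)

lemma ph0_zero : ph0 0 = 0 := by norm_num [ph0]

lemma ph0_hasDeriv (x : ℝ) : HasDerivAt ph0 (x - x^2) x := by
  show HasDerivAt (fun u : ℝ => u^2/2 - u^3/3) (x - x^2) x
  have h : HasDerivAt (fun u : ℝ => u^2/2 - u^3/3) _ x :=
    ((hasDerivAt_pow 2 x).div_const 2).sub ((hasDerivAt_pow 3 x).div_const 3)
  convert h using 1
  norm_num

lemma deriv_ph0 : deriv ph0 = fun x => x - x^2 :=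
  funext fun x => (ph0_hasDeriv x).deriv

lemma deriv_ph0_one : deriv ph0 1 = 0 := by rw [deriv_ph0]; norm_num

lemma deriv2_ph0 : deriv (deriv ph0) = fun x => 1 - 2*x := by
  rw [deriv_ph0]
  funext x
  have h : HasDerivAt (fun x : ℝ => x - x^2) (1 - 2*x) x := by
    have : HasDerivAt (fun x : ℝ => id x - x^2) _ x := (hasDerivAt_id x).sub (hasDerivAt_pow 2 x)
    simpa using this
  exact h.deriv

/-! ### Gronwall -/

lemma zero_of_integral_eq (f : ℝ → ℝ) (hf : Continuous f) (K : ℝ)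
    (h : ∀ t, 0 ≤ t → f t = K * ∫ s in (0:ℝ)..t, f s) : ∀ t, 0 ≤ t → f t = 0 := by
  set F : ℝ → ℝ := fun t => ∫ s in (0:ℝ)..t, f s with hF
  have hF' : ∀ x : ℝ, HasDerivAt F (f x) x := fun x =>
    intervalIntegral.integral_hasDerivAt_right (hf.intervalIntegrable _ _)
      (hf.stronglyMeasurableAtFilter _ _) hf.continuousAt
  intro t ht
  have key := norm_le_gronwallBound_of_norm_deriv_right_le (f := F) (f' := f)
    (δ := 0) (K := |K|) (ε := 0) (a := 0) (b := t)
    (fun x _ => (hF' x).continuousAt.continuousWithinAt)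
    (fun x _ => (hF' x).hasDerivWithinAt)
    (by simp [hF])
    (fun x hx => by
      rw [Real.norm_eq_abs, Real.norm_eq_abs, h x hx.1]
      have : (∫ s in (0:ℝ)..x, f s) = F x := rfl
      rw [this, abs_mul, add_zero])
  have hFt : F t = 0 := by
    have := key t ⟨ht, le_refl t⟩
    rw [gronwallBound_ε0_δ0] at this
    simpa [Real.norm_eq_abs, abs_nonpos_iff] using this
  rw [h t ht]
  have : (∫ s in (0:ℝ)..t, f s) = F t := rfl
  rw [this, hFt, mul_zero]

/-! ### Trigonometric algebra and Stone–Weierstrass -/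

noncomputable def sk (k : ℤ) : C(XX,ℝ) :=
  ⟨fun u => Real.sin (lam k * u), by fun_prop⟩

noncomputable def c0 : C(XX,ℝ) := ⟨fun u => Real.cos (π * u), by fun_prop⟩

def x0 : XX := ⟨0, by norm_num⟩

lemma key_identity (k : ℤ) :
    c0 * sk k = (2⁻¹:ℝ) • sk (k+1) + (2⁻¹:ℝ) • sk (k-1) := by
  ext u
  simp only [ContinuousMap.mul_apply, ContinuousMap.add_apply, ContinuousMap.smul_apply,
    smul_eq_mul, sk, c0, ContinuousMap.coe_mk]
  have h1 : lam (k+1) * u = lam k * u + π * (u:ℝ) := by unfold lam; push_cast; ring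
  have h2 : lam (k-1) * u = lam k * u - π * (u:ℝ) := by unfold lam; push_cast; ring
  rw [h1, h2, Real.sin_add, Real.sin_sub]
  ring

noncomputable def V : Submodule ℝ C(XX,ℝ) :=
  (Submodule.span ℝ (Set.range sk)).topologicalClosure

lemma sk_mem_V (k : ℤ) : sk k ∈ V :=
  Submodule.le_topologicalClosure _ (Submodule.subset_span ⟨k, rfl⟩)

lemma V_isClosed : IsClosed (V : Set C(XX,ℝ)) := Submodule.isClosed_topologicalClosure _

lemma smul_mem_V {h : C(XX,ℝ)} (r : ℝ) (hh : h ∈ V) : r • h ∈ V := V.smul_mem r hh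

lemma mul_mem_V (x : C(XX,ℝ)) (hx : ∀ k, x * sk k ∈ V) :
    ∀ h ∈ V, x * h ∈ V := by
  intro h hh
  have hclosed : IsClosed {g : C(XX,ℝ) | x * g ∈ V} :=
    IsClosed.preimage (continuous_const.mul continuous_id) V_isClosed
  have hspan : (Submodule.span ℝ (Set.range sk) : Set C(XX,ℝ)) ⊆ {g | x * g ∈ V} := by
    intro g hg
    induction hg using Submodule.span_induction with
    | mem g hg => obtain ⟨k, rfl⟩ := hg; exact hx k
    | zero => simp only [Set.mem_setOf_eq, mul_zero]; exact V.zero_mem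
    | add a b _ _ ha hb => simp only [Set.mem_setOf_eq, mul_add]; exact V.add_mem ha hb
    | smul r a _ ha => simp only [Set.mem_setOf_eq, mul_smul_comm]; exact V.smul_mem r ha
  have : (V : Set C(XX,ℝ)) ⊆ {g | x * g ∈ V} := by
    rw [V, Submodule.topologicalClosure_coe]
    exact closure_minimal hspan hclosed
  exact this hh

lemma adjoin_mul_sk_mem (g : C(XX,ℝ)) (hg : g ∈ Algebra.adjoin ℝ {c0}) (k : ℤ) :
    g * sk k ∈ V := by
  induction hg using Algebra.adjoin_induction generalizing k with
  | mem x hx =>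
      rw [Set.mem_singleton_iff] at hx
      subst hx
      rw [key_identity k]
      exact V.add_mem (smul_mem_V _ (sk_mem_V _)) (smul_mem_V _ (sk_mem_V _))
  | algebraMap r =>
      have : (algebraMap ℝ C(XX,ℝ) r) * sk k = r • sk k := by
        rw [Algebra.algebraMap_eq_smul_one, smul_mul_assoc, one_mul]
      rw [this]; exact smul_mem_V r (sk_mem_V k)
  | add x y _ _ hx hy => rw [add_mul]; exact V.add_mem (hx k) (hy k)
  | mul x y hxm _ hx hy =>
      rw [mul_assoc]
      exact mul_mem_V x (fun j => hx j) _ (hy k)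

lemma sep : (Algebra.adjoin ℝ {c0} : Subalgebra ℝ C(XX,ℝ)).SeparatesPoints := by
  intro x y hxy
  refine ⟨c0, ⟨c0, Algebra.subset_adjoin rfl, rfl⟩, ?_⟩
  simp only [c0, ContinuousMap.coe_mk]
  intro hc
  apply hxy
  have hx : π * (x:ℝ) ∈ Set.Icc 0 π :=
    ⟨mul_nonneg Real.pi_pos.le x.2.1, by nlinarith [x.2.2, Real.pi_pos]⟩
  have hy : π * (y:ℝ) ∈ Set.Icc 0 π :=
    ⟨mul_nonneg Real.pi_pos.le y.2.1, by nlinarith [y.2.2, Real.pi_pos]⟩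
  have := Real.injOn_cos hx hy hc
  exact Subtype.ext (mul_left_cancel₀ Real.pi_ne_zero this)

lemma mul_sk0_mem (f : C(XX,ℝ)) : f * sk 0 ∈ V := by
  have htop : (Algebra.adjoin ℝ {c0} : Subalgebra ℝ C(XX,ℝ)).topologicalClosure = ⊤ :=
    ContinuousMap.subalgebra_topologicalClosure_eq_top_of_separatesPoints _ sep
  have hf : f ∈ closure ((Algebra.adjoin ℝ {c0} : Subalgebra ℝ C(XX,ℝ)) : Set C(XX,ℝ)) := by
    rw [← Subalgebra.topologicalClosure_coe, htop]
    trivial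
  have hclosed : IsClosed {g : C(XX,ℝ) | g * sk 0 ∈ V} :=
    IsClosed.preimage (continuous_id.mul continuous_const) V_isClosed
  have hsub : ((Algebra.adjoin ℝ {c0} : Subalgebra ℝ C(XX,ℝ)) : Set C(XX,ℝ))
      ⊆ {g | g * sk 0 ∈ V} := fun g hg => adjoin_mul_sk_mem g hg 0
  exact closure_minimal hsub hclosed hf

/-! ### Elementary facts about `sk 0` -/

lemma sk0_nonneg (u : XX) : 0 ≤ sk 0 u := by
  apply Real.sin_nonneg_of_nonneg_of_le_pi
  · have := u.2.1
    unfold lam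
    push_cast
    nlinarith [Real.pi_pos]
  · have := u.2.2
    unfold lam
    push_cast
    nlinarith [Real.pi_pos]

lemma sk0_le_one (u : XX) : sk 0 u ≤ 1 := Real.sin_le_one _

lemma sk0_mono {a : ℝ} (ha : 0 ≤ a) (u : XX) (hu : a ≤ (u:ℝ)) :
    Real.sin (lam 0 * a) ≤ sk 0 u := by
  apply Real.sin_le_sin_of_le_of_le_pi_div_two
  · unfold lam; push_cast; nlinarith [Real.pi_pos]
  · unfold lam; push_cast; nlinarith [Real.pi_pos, u.2.2]
  · unfold lam; push_cast; nlinarith [Real.pi_pos]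

lemma sk0_pos_of_pos {a : ℝ} (ha : 0 < a) (ha1 : a ≤ 1) : 0 < Real.sin (lam 0 * a) := by
  apply Real.sin_pos_of_pos_of_lt_pi
  · unfold lam; push_cast; nlinarith [Real.pi_pos]
  · unfold lam; push_cast; nlinarith [Real.pi_pos]

/-! ### Uniform approximation -/

lemma approx_key (ψ : C(XX,ℝ)) (hψ0 : ψ x0 = 0) {ε : ℝ} (hε : 0 < ε) :
    ∃ n : ℕ, ‖ψ * (1 - sk 0^2)^n‖ ≤ ε := by
  obtain ⟨δ, hδpos, hδ⟩ := Metric.continuousAt_iff.mp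
    ((ψ.continuous.continuousAt (x := x0))) ε hε
  set δ' : ℝ := min δ 1 with hδ'def
  have hδ'pos : 0 < δ' := lt_min hδpos one_pos
  have hδ'le1 : δ' ≤ 1 := min_le_right _ _
  set s0 : ℝ := Real.sin (lam 0 * δ') with hs0def
  have hs0pos : 0 < s0 := sk0_pos_of_pos hδ'pos hδ'le1
  have hs0le1 : s0 ≤ 1 := Real.sin_le_one _
  set r : ℝ := 1 - s0^2 with hrdef
  have hr0 : 0 ≤ r := by nlinarith
  have hr1 : r < 1 := by nlinarith
  set M : ℝ := ‖ψ‖ with hMdef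
  have hM0 : 0 ≤ M := norm_nonneg _
  obtain ⟨n, hn⟩ := ((tendsto_pow_atTop_nhds_zero_of_lt_one hr0 hr1).eventually
    (gt_mem_nhds (show (0:ℝ) < ε/(M+1) by positivity))).exists
  refine ⟨n, ?_⟩
  refine (ContinuousMap.norm_le (f := ψ * (1 - sk 0^2)^n) hε.le).mpr fun u => ?_
  have huval : ((ψ * (1 - sk 0^2)^n : C(XX,ℝ))) u = ψ u * ((1:ℝ) - sk 0 u^2)^n := by
    simp [ContinuousMap.mul_apply, ContinuousMap.pow_apply, ContinuousMap.sub_apply]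
  rw [huval, Real.norm_eq_abs, abs_mul]
  have hfac0 : 0 ≤ 1 - sk 0 u^2 := by nlinarith [sk0_nonneg u, sk0_le_one u]
  have hfac1 : 1 - sk 0 u^2 ≤ 1 := by nlinarith [sk0_nonneg u]
  have habsfac : |(1 - sk 0 u^2)^n| = (1 - sk 0 u^2)^n := abs_of_nonneg (pow_nonneg hfac0 n)
  rw [habsfac]
  rcases lt_or_ge ((u:ℝ)) δ' with hcase | hcase
  · have hdist : dist u x0 < δ := by
      rw [Subtype.dist_eq, Real.dist_eq]
      have : (x0:ℝ) = 0 := rfl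
      rw [this, sub_zero, abs_of_nonneg u.2.1]
      exact lt_of_lt_of_le hcase (min_le_left _ _)
    have := hδ hdist
    rw [hψ0, Real.dist_eq, sub_zero] at this
    have hpow_le : (1 - sk 0 u^2)^n ≤ 1 := pow_le_one₀ hfac0 hfac1
    nlinarith [abs_nonneg (ψ u)]
  · have hs : s0 ≤ sk 0 u := sk0_mono hδ'pos.le u hcase
    have hsq : s0^2 ≤ sk 0 u^2 := by nlinarith [sk0_nonneg u]
    have hfacr : 1 - sk 0 u^2 ≤ r := by rw [hrdef]; linarith
    have hpow : (1 - sk 0 u^2)^n ≤ r^n := pow_le_pow_left₀ hfac0 hfacr n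
    have hψu : |ψ u| ≤ M := ψ.norm_coe_le_norm u
    have hmm : |ψ u| * (1 - sk 0 u^2)^n ≤ M * r^n :=
      mul_le_mul hψu hpow (pow_nonneg hfac0 n) hM0
    have h2 : M * r^n ≤ M * (ε/(M+1)) := mul_le_mul_of_nonneg_left hn.le hM0
    have h3 : M * (ε/(M+1)) ≤ ε := by
      rw [div_eq_mul_inv]
      have hMp : (0:ℝ) < M + 1 := by linarith
      have : M * (M+1)⁻¹ ≤ 1 := by
        rw [← div_eq_mul_inv, div_le_one hMp]; linarith
      nlinarith [mul_pos hε (inv_pos.mpr hMp)]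
    linarith

/-! ### Vanishing on functions that vanish at `0` -/

lemma Lm_vanish (σ : MeasureTheory.SignedMeasure XX) (hk : ∀ k : ℤ, Lm σ (sk k) = 0) :
    ∀ ψ : C(XX,ℝ), ψ x0 = 0 → Lm σ ψ = 0 := by
  have hV : ∀ h ∈ V, Lm σ h = 0 := by
    intro h hh
    have hker : IsClosed {g : C(XX,ℝ) | Lm σ g = 0} :=
      isClosed_eq (Lm_continuous σ) continuous_const
    have hspan : (Submodule.span ℝ (Set.range sk) : Set C(XX,ℝ)) ⊆ {g | Lm σ g = 0} := by
      intro g hg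
      induction hg using Submodule.span_induction with
      | mem g hg => obtain ⟨k, rfl⟩ := hg; exact hk k
      | zero => exact Lm_zero σ
      | add a b _ _ ha hb =>
          show Lm σ (a + b) = 0
          rw [Lm_add σ a b]
          have ha' : Lm σ a = 0 := ha
          have hb' : Lm σ b = 0 := hb
          rw [ha', hb', add_zero]
      | smul r a _ ha =>
          show Lm σ (r • a) = 0
          rw [Lm_smul σ r a]
          have ha' : Lm σ a = 0 := ha
          rw [ha', mul_zero]
    have hsubset : (V : Set C(XX,ℝ)) ⊆ {g | Lm σ g = 0} := by
      rw [V, Submodule.topologicalClosure_coe]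
      exact closure_minimal hspan hker
    exact hsubset hh
  have hfs : ∀ f : C(XX,ℝ), Lm σ (f * sk 0) = 0 := fun f => hV _ (mul_sk0_mem f)
  intro ψ hψ0
  have hdecomp : ∀ n : ℕ, Lm σ ψ = Lm σ (ψ * (1 - sk 0^2)^n) := by
    intro n
    have hgeom : ψ = ψ * (1 - sk 0^2)^n
        + (ψ * sk 0 * (∑ i ∈ Finset.range n, (1 - sk 0^2)^i)) * sk 0 := by
      have h := geom_sum_mul (1 - sk 0^2) n
      linear_combination ψ * h
    conv_lhs => rw [hgeom]
    rw [Lm_add, hfs, add_zero]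
  have hbound : ∀ ε : ℝ, 0 < ε → |Lm σ ψ| ≤ mass σ * ε := by
    intro ε hε
    obtain ⟨n, hn⟩ := approx_key ψ hψ0 hε
    rw [hdecomp n]
    calc |Lm σ (ψ * (1 - sk 0^2)^n)| ≤ mass σ * ‖ψ * (1 - sk 0^2)^n‖ := Lm_bound σ _
    _ ≤ mass σ * ε := mul_le_mul_of_nonneg_left hn (mass_nonneg σ)
  by_contra h0
  have hpos : 0 < |Lm σ ψ| := abs_pos.mpr h0
  have hM : 0 ≤ mass σ := mass_nonneg σ
  have hd : (0:ℝ) < 2 * (mass σ + 1) := by positivity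
  have hb := hbound (|Lm σ ψ| / (2 * (mass σ + 1))) (by positivity)
  rw [mul_div_assoc'] at hb
  rw [le_div_iff₀ hd] at hb
  nlinarith

end HeatUniq

/-- Uniqueness of measure-valued weak solutions of the heat equation
`∂_t T = (D/(4γ)) ∂_u² T` with Dirichlet boundary condition at `u = 0` and Neumann at
`u = 1`: a weakly continuous family of finite signed measures satisfying the weak
formulation with zero data vanishes identically. -/
theorem heat_equation_uniqueness (D γ : ℝ) (hD : 0 < D) (hγ : 0 < γ)
    (T : ℝ → MeasureTheory.SignedMeasure (Set.Icc (0:ℝ) 1))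
    (hcont : ∀ φ : ℝ → ℝ, Continuous φ →
      Continuous (fun t => sIntegral (T t) (fun u => φ u)))
    (heq : ∀ t : ℝ, 0 ≤ t → ∀ φ : ℝ → ℝ, ContDiff ℝ 2 φ → φ 0 = 0 → deriv φ 1 = 0 →
      sIntegral (T t) (fun u => φ u)
        = (D / (4 * γ)) * ∫ s in (0:ℝ)..t, sIntegral (T s) (fun u => deriv (deriv φ) u)) :
    ∀ t : ℝ, 0 ≤ t → T t = 0 := by
  classical
  intro t ht
  set c : ℝ := D / (4 * γ) with hc
  have hcpos : 0 < c := by positivity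
  -- Step 1 : eigenfunction coefficients vanish
  have step1 : ∀ k : ℤ, ∀ s : ℝ, 0 ≤ s → HeatUniq.Lm (T s) (HeatUniq.sk k) = 0 := by
    intro k
    have hf : Continuous (fun s => sIntegral (T s) (fun u => HeatUniq.phik k u)) :=
      hcont _ (HeatUniq.phik_continuous k)
    have heqk : ∀ s : ℝ, 0 ≤ s →
        (fun s => sIntegral (T s) (fun u => HeatUniq.phik k u)) s
          = (c * (-(HeatUniq.lam k)^2)) * ∫ r in (0:ℝ)..s,
              (fun s => sIntegral (T s) (fun u => HeatUniq.phik k u)) r := by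
      intro s hs
      have h := heq s hs (HeatUniq.phik k) (HeatUniq.phik_contDiff k)
        (HeatUniq.phik_zero k) (HeatUniq.deriv_phik_one k)
      have hrw : (fun r : ℝ =>
            sIntegral (T r) (fun u : HeatUniq.XX => deriv (deriv (HeatUniq.phik k)) u))
          = fun r : ℝ => (-(HeatUniq.lam k)^2)
              * sIntegral (T r) (fun u : HeatUniq.XX => HeatUniq.phik k u) := by
        funext r
        rw [HeatUniq.deriv2_phik]
        exact HeatUniq.Lm_smul (T r) (-(HeatUniq.lam k)^2) (HeatUniq.sk k)
      rw [hrw] at h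
      rw [intervalIntegral.integral_const_mul] at h
      simpa [mul_assoc] using h
    intro s hs
    exact HeatUniq.zero_of_integral_eq _ hf _ heqk s hs
  -- Step 2 : integrals of functions vanishing at 0 vanish
  have KEY : ∀ s : ℝ, 0 ≤ s → ∀ ψ : C(HeatUniq.XX,ℝ), ψ HeatUniq.x0 = 0 →
      HeatUniq.Lm (T s) ψ = 0 := fun s hs =>
    HeatUniq.Lm_vanish (T s) (fun k => step1 k s hs)
  -- Step 3 : total mass function and its vanishing
  set aT : ℝ → ℝ := fun s => sIntegral (T s) (fun _ => (1:ℝ)) with haT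
  have haTcont : Continuous aT := hcont (fun _ => (1:ℝ)) continuous_const
  have haT_eq : ∀ s : ℝ, aT s = HeatUniq.Lm (T s) 1 := fun s => rfl
  have hintzero : ∀ u : ℝ, 0 ≤ u → (∫ s in (0:ℝ)..u, aT s) = 0 := by
    intro u hu
    have h := heq u hu HeatUniq.ph0 HeatUniq.ph0_contDiff HeatUniq.ph0_zero
      HeatUniq.deriv_ph0_one
    have hψ0cm : Continuous (fun x : HeatUniq.XX => HeatUniq.ph0 x) :=
      (HeatUniq.ph0_contDiff.continuous).comp continuous_subtype_val
    have hLHS : sIntegral (T u) (fun x : HeatUniq.XX => HeatUniq.ph0 x) = 0 := by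
      exact KEY u hu ⟨fun x : HeatUniq.XX => HeatUniq.ph0 x, hψ0cm⟩
        (by exact HeatUniq.ph0_zero)
    rw [hLHS] at h
    have hcong : Set.EqOn
        (fun s : ℝ => sIntegral (T s) (fun x : HeatUniq.XX => deriv (deriv HeatUniq.ph0) x))
        aT (Set.uIcc (0:ℝ) u) := by
      intro s hs
      have hs0 : 0 ≤ s := by
        rw [Set.uIcc_of_le hu] at hs
        exact hs.1
      simp only
      rw [HeatUniq.deriv2_ph0]
      have hgcont : Continuous (fun x : HeatUniq.XX => (1:ℝ) - 2*(x:ℝ)) := by fun_prop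
      set g : C(HeatUniq.XX,ℝ) := ⟨fun x : HeatUniq.XX => (1:ℝ) - 2*(x:ℝ), hgcont⟩ with hg
      have : sIntegral (T s) (fun x : HeatUniq.XX => (1:ℝ) - 2*(x:ℝ))
          = HeatUniq.Lm (T s) g := rfl
      rw [this]
      have hgdec : g = (g - 1) + 1 := by ring
      rw [hgdec, HeatUniq.Lm_add]
      have hz : HeatUniq.Lm (T s) (g - 1) = 0 := by
        apply KEY s hs0
        simp [hg, HeatUniq.x0]
      rw [hz, zero_add, ← haT_eq]
    rw [intervalIntegral.integral_congr hcong] at h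
    have : c * ∫ s in (0:ℝ)..u, aT s = 0 := h.symm
    exact (mul_eq_zero.mp this).resolve_left (ne_of_gt hcpos)
  have haTzero : ∀ s : ℝ, 0 ≤ s → aT s = 0 := by
    have hpos : ∀ s : ℝ, 0 < s → aT s = 0 := by
      intro s hs
      have hFd : HasDerivAt (fun u => ∫ r in (0:ℝ)..u, aT r) (aT s) s :=
        intervalIntegral.integral_hasDerivAt_right (haTcont.intervalIntegrable _ _)
          (haTcont.stronglyMeasurableAtFilter _ _) haTcont.continuousAt
      have hev : (fun u => ∫ r in (0:ℝ)..u, aT r) =ᶠ[nhds s] (fun _ => (0:ℝ)) := by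
        filter_upwards [eventually_gt_nhds hs] with u hu
        exact hintzero u hu.le
      have hF0 : HasDerivAt (fun u => ∫ r in (0:ℝ)..u, aT r) 0 s :=
        (hasDerivAt_const s (0:ℝ)).congr_of_eventuallyEq hev
      exact hFd.unique hF0
    intro s hs
    rcases hs.lt_or_eq with h | h
    · exact hpos s h
    · have hcl : IsClosed {x : ℝ | aT x = 0} := isClosed_eq haTcont continuous_const
      have hsub : Set.Ioi (0:ℝ) ⊆ {x | aT x = 0} := fun x hx => hpos x hx
      have h0mem : s ∈ closure (Set.Ioi (0:ℝ)) := by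
        rw [closure_Ioi, ← h]
        exact Set.self_mem_Ici
      exact closure_minimal hsub hcl h0mem
  -- Step 4 : all continuous integrals vanish at time t
  have hall : ∀ ψ : C(HeatUniq.XX,ℝ), HeatUniq.Lm (T t) ψ = 0 := by
    intro ψ
    have hdec : ψ = (ψ - (ψ HeatUniq.x0) • 1) + (ψ HeatUniq.x0) • 1 := by ring
    rw [hdec, HeatUniq.Lm_add, HeatUniq.Lm_smul]
    have h1 : HeatUniq.Lm (T t) (ψ - (ψ HeatUniq.x0) • 1) = 0 := by
      apply KEY t ht
      simp
    have h2 : HeatUniq.Lm (T t) 1 = 0 := by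
      rw [← haT_eq t]
      exact haTzero t ht
    rw [h1, h2, mul_zero, add_zero]
  -- Step 5 : conclude that the measure is zero
  have hint : ∀ ψ : C(HeatUniq.XX,ℝ),
      (∫ x, ψ x ∂(T t).toJordanDecomposition.posPart)
        = ∫ x, ψ x ∂(T t).toJordanDecomposition.negPart := by
    intro ψ
    have := hall ψ
    simp only [HeatUniq.Lm, sIntegral] at this
    linarith
  have hmeq : (T t).toJordanDecomposition.posPart = (T t).toJordanDecomposition.negPart := by
    apply MeasureTheory.ext_of_forall_lintegral_eq_of_IsFiniteMeasure
    intro f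
    have hψc : Continuous (fun x : HeatUniq.XX => (f x : ℝ)) :=
      NNReal.continuous_coe.comp f.continuous
    set ψ : C(HeatUniq.XX,ℝ) := ⟨fun x => (f x : ℝ), hψc⟩ with hψ
    have hip : Integrable (fun x => ((f x : ℝ≥0) : ℝ)) (T t).toJordanDecomposition.posPart :=
      HeatUniq.integrable_cm _ ψ
    have hin : Integrable (fun x => ((f x : ℝ≥0) : ℝ)) (T t).toJordanDecomposition.negPart :=
      HeatUniq.integrable_cm _ ψ
    rw [MeasureTheory.lintegral_coe_eq_integral _ hip,
        MeasureTheory.lintegral_coe_eq_integral _ hin]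
    congr 1
    exact hint ψ
  have hrepr : (T t).toJordanDecomposition.toSignedMeasure = T t :=
    MeasureTheory.SignedMeasure.toSignedMeasure_toJordanDecomposition (T t)
  rw [← hrepr]
  have : (T t).toJordanDecomposition.toSignedMeasure
      = (T t).toJordanDecomposition.posPart.toSignedMeasure
        - (T t).toJordanDecomposition.negPart.toSignedMeasure := rfl
  rw [this]
  have h2 : (T t).toJordanDecomposition.posPart.toSignedMeasure
      = (T t).toJordanDecomposition.negPart.toSignedMeasure := by
    congr 1
  rw [h2, sub_self]
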